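/- arXiv:2506.17736 — 3 statements merged into one kernel-verified Lean document; each statement's English description precedes it below -/
import Mathlib

section
/- Let d ≥ 2 and k ∈ ℕ ∪ {0}. Then there exists a constant C > 0, depending only on d and k, such that |c_{k,l}| ≤ C·l^{2k} for all integers l ≥ 1. -/
open MeasureTheory Real Filter
open scoped ENNReal NNReal ComplexConjugate

noncomputable section

abbrev Sphere (d : ℕ) : Type := ↥(Metric.sphere (0 : EuclideanSpace ℝ (Fin d)) 1)

def sphereMeasure (d : ℕ) : Measure (Sphere d) := μH[(d : ℝ) - 1]

def sphereVol (d : ℕ) : ℝ := (sphereMeasure d Set.univ).toReal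

/-- Membership in the weight class `W(T, t₀, T₀)`. -/
def memW (T t₀ T₀ : ℝ) (ρ : ℝ → ℝ) : Prop :=
  MemLp ρ 2 (volume.restrict (Set.Ioc (0 : ℝ) T)) ∧
    (∀ᵐ θ ∂(volume.restrict (Set.Ioc (0 : ℝ) T)), 0 ≤ ρ θ) ∧
    0 < ∫ θ in t₀..T₀, ρ θ

/-- The normalizing constant `z_t`. -/
def zt (d : ℕ) (T : ℝ) (ρ : ℝ → ℝ) (t : ℝ) : ℝ :=
  sphereVol (d - 1) * (t / T) * ∫ θ in (0 : ℝ)..T, (Real.sin (t * θ / T)) ^ (d - 2) * ρ θ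

/-- The spherical cap `C(ξ, t)`. -/
def cap (d : ℕ) (ξ : Sphere d) (t : ℝ) : Set (Sphere d) :=
  {η | Real.cos t ≤ inner (𝕜 := ℝ) (ξ : EuclideanSpace ℝ (Fin d)) (η : EuclideanSpace ℝ (Fin d))}

/-- The generalized average `A_t^ρ f (ξ)`. -/
def avg (d : ℕ) (T : ℝ) (ρ : ℝ → ℝ) (f : Sphere d → ℂ) (t : ℝ) (ξ : Sphere d) : ℂ :=
  (zt d T ρ t : ℂ)⁻¹ *
    ∫ η in cap d ξ t,
      (ρ ((T / t) * Real.arccos (inner (𝕜 := ℝ) (ξ : EuclideanSpace ℝ (Fin d))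
        (η : EuclideanSpace ℝ (Fin d)))) : ℂ) * f η ∂(sphereMeasure d)

/-- The Legendre polynomial `P_{l,d}` of degree `l` in dimension `d`. -/
def LegendreP (d l : ℕ) (s : ℝ) : ℝ :=
  (l.factorial : ℝ) * Real.Gamma (((d : ℝ) - 1) / 2) *
    ∑ k ∈ Finset.range (l / 2 + 1),
      (-1) ^ k * (1 - s ^ 2) ^ k * s ^ (l - 2 * k) /
        (4 ^ k * (k.factorial : ℝ) * ((l - 2 * k).factorial : ℝ) *
          Real.Gamma ((k : ℝ) + ((d : ℝ) - 1) / 2))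

/-- `c_{k,l} = (-1)^k P_{l,d}^{(k)}(1) / k!`. -/
def legCoeff (d k l : ℕ) : ℝ :=
  (-1) ^ k * iteratedDeriv k (LegendreP d l) 1 / (k.factorial : ℝ)

/-- The multiplier `m_{l,t}^ρ`. -/
def mlt (d : ℕ) (T : ℝ) (ρ : ℝ → ℝ) (l : ℕ) (t : ℝ) : ℝ :=
  sphereVol (d - 1) / zt d T ρ t * (t / T) *
    ∫ θ in (0 : ℝ)..T,
      LegendreP d l (Real.cos (t * θ / T)) * (Real.sin (t * θ / T)) ^ (d - 2) * ρ θ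

/-- `B_k^ρ(t) = A_t^ρ(|ξ-·|^{2k})(ξ)`. -/
def Bk (d : ℕ) (T : ℝ) (ρ : ℝ → ℝ) (k : ℕ) (t : ℝ) : ℝ :=
  2 ^ k * (sphereVol (d - 1) / zt d T ρ t) * (t / T) *
    ∫ θ in (0 : ℝ)..T,
      (1 - Real.cos (t * θ / T)) ^ k * (Real.sin (t * θ / T)) ^ (d - 2) * ρ θ

/-- `M_{n,l,t}^ρ`. -/
def Mnlt (d : ℕ) (T : ℝ) (ρ : ℝ → ℝ) (n l : ℕ) (t : ℝ) : ℝ :=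
  mlt d T ρ l t - ∑ k ∈ Finset.range (n + 1), legCoeff d k l / 2 ^ k * Bk d T ρ k t

/-- `N_{n,l,t}^ρ`. -/
def Nnlt (d : ℕ) (T : ℝ) (ρ : ℝ → ℝ) (n l : ℕ) (t : ℝ) : ℝ :=
  Mnlt d T ρ (n - 1) l t - legCoeff d n l / 2 ^ n * Bk d T ρ n t * mlt d T ρ l t

/-- `I_{α,n}^{ρ,T}(l)`. -/
def Ifun (d : ℕ) (T : ℝ) (ρ : ℝ → ℝ) (n : ℕ) (α : ℝ) (l : ℕ) : ℝ≥0∞ :=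
  ∫⁻ t in Set.Ioc (0 : ℝ) T, ENNReal.ofReal (|Mnlt d T ρ n l t| ^ 2 / t ^ (2 * α + 1))

/-- `J_n^{ρ,T}(l)`. -/
def Jfun (d : ℕ) (T : ℝ) (ρ : ℝ → ℝ) (n l : ℕ) : ℝ≥0∞ :=
  ∫⁻ t in Set.Ioc (0 : ℝ) T, ENNReal.ofReal (|Nnlt d T ρ n l t| ^ 2 / t ^ (4 * n + 1))

/-- A spherical harmonic of degree `l`: the restriction to the sphere of a harmonic
homogeneous polynomial of degree `l` on `ℝ^d`. -/
def IsSphericalHarmonic (d l : ℕ) (Y : Sphere d → ℂ) : Prop :=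
  ∃ p : MvPolynomial (Fin d) ℂ, p.IsHomogeneous l ∧
    (∑ i : Fin d, MvPolynomial.pderiv i (MvPolynomial.pderiv i p)) = 0 ∧
    ∀ η : Sphere d,
      Y η = MvPolynomial.eval
        (fun i => (((η : EuclideanSpace ℝ (Fin d)) i : ℝ) : ℂ)) p

/-- A complete orthonormal system of spherical harmonics on `S^{d-1}`. -/
structure SHBasis (d : ℕ) where
  ν : ℕ → ℕ
  Y : (l : ℕ) → Fin (ν l) → Sphere d → ℂ
  harmonic : ∀ l j, IsSphericalHarmonic d l (Y l j)
  orthonormal : ∀ l j l' j',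
    (∫ η, Y l j η * conj (Y l' j' η) ∂(sphereMeasure d)) =
      if l = l' ∧ (j : ℕ) = (j' : ℕ) then 1 else 0
  complete : ∀ f : Sphere d → ℂ, MemLp f 2 (sphereMeasure d) →
    (∀ l j, (∫ η, f η * conj (Y l j η) ∂(sphereMeasure d)) = 0) →
    f =ᵐ[sphereMeasure d] 0

/-- The Fourier coefficient `f̂_{lj}` with respect to a spherical harmonic basis. -/
def shCoeff (d : ℕ) (B : SHBasis d) (f : Sphere d → ℂ) (l : ℕ) (j : Fin (B.ν l)) : ℂ :=
  ∫ η, f η * conj (B.Y l j η) ∂(sphereMeasure d)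

/-- Membership in the Sobolev space `H^α(S^{d-1})`. -/
def MemSobolev (d : ℕ) (B : SHBasis d) (α : ℝ) (f : Sphere d → ℂ) : Prop :=
  MemLp f 2 (sphereMeasure d) ∧
    Summable (fun l : ℕ =>
      (1 + Real.sqrt l * Real.sqrt ((l : ℝ) + d - 2)) ^ (2 * α) *
        ∑ j, ‖shCoeff d B f l j‖ ^ 2)

/-- The function `η ↦ |ξ - η|^{2k}` on the sphere, as a complex-valued function. -/
def distPow (d : ℕ) (ξ : Sphere d) (k : ℕ) : Sphere d → ℂ :=
  fun η => ((‖(ξ : EuclideanSpace ℝ (Fin d)) - (η : EuclideanSpace ℝ (Fin d))‖ ^ (2 * k) : ℝ) : ℂ)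

/-- The square of the generalized square function `S_α^{ρ,T}(f, g₁, …, g_n)(ξ)`,
valued in `ℝ≥0∞`.  For `α = 2n` the modified (endpoint) definition is used. -/
def sqFnSq (d : ℕ) (T : ℝ) (ρ : ℝ → ℝ) (n : ℕ) (α : ℝ)
    (f : Sphere d → ℂ) (g : ℕ → Sphere d → ℂ) (ξ : Sphere d) : ℝ≥0∞ :=
  if α = 2 * n then
    ∫⁻ t in Set.Ioc (0 : ℝ) T, ENNReal.ofReal
      (‖avg d T ρ f t ξ - f ξ -
          (∑ k ∈ Finset.Icc 1 (n - 1), g k ξ * avg d T ρ (distPow d ξ k) t ξ) -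
          avg d T ρ (g n) t ξ * avg d T ρ (distPow d ξ n) t ξ‖ ^ 2 / t ^ (2 * α + 1))
  else
    ∫⁻ t in Set.Ioc (0 : ℝ) T, ENNReal.ofReal
      (‖avg d T ρ f t ξ - f ξ -
          ∑ k ∈ Finset.Icc 1 n, g k ξ * avg d T ρ (distPow d ξ k) t ξ‖ ^ 2 / t ^ (2 * α + 1))

/-- Condition (⋆) on the weight `ρ`. -/
def starCond (d n : ℕ) (T T₀ : ℝ) (ρ : ℝ → ℝ) : Prop :=
  ((d : ℝ) - 1) / ((d : ℝ) + 2 * n - 1) *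
      ((∫ θ in (0 : ℝ)..T, θ ^ (d - 2) * ρ θ) ^ 2 *
        ∫ θ in (0 : ℝ)..T, θ ^ (2 * n + d) * ρ θ) /
      ((∫ θ in (0 : ℝ)..T₀, θ ^ (d - 2) * ρ θ) * (∫ θ in (0 : ℝ)..T₀, θ ^ d * ρ θ) *
        ∫ θ in (0 : ℝ)..T₀, θ ^ (2 * n + d - 2) * ρ θ) < 1

/-- `k_{d,n}(l)`. -/
def kdn (d n l : ℕ) : ℝ :=
  if l = n then 1 / 2
  else (2 * (n : ℝ) + d - 1) / (((l : ℝ) + n + d - 2) * ((l : ℝ) - n))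

/-- The angle `a_{d,n,ε}(l)` defined by `cos a = 1 - ε k_{d,n}(l)`. -/
def adn (d n : ℕ) (ε : ℝ) (l : ℕ) : ℝ := Real.arccos (1 - ε * kdn d n l)

/-- The Poisson kernel `p_r(η, ξ)` on `S^{d-1}`. -/
def spherePoissonKernel (d : ℕ) (r : ℝ) (η ξ : Sphere d) : ℝ :=
  (1 - r ^ 2) /
    (sphereVol d *
      ‖r • (ξ : EuclideanSpace ℝ (Fin d)) - (η : EuclideanSpace ℝ (Fin d))‖ ^ d)

/-- The Poisson transform `P_r f` of a complex-valued function. -/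
def poisson (d : ℕ) (r : ℝ) (f : Sphere d → ℂ) (ξ : Sphere d) : ℂ :=
  ∫ η, (spherePoissonKernel d r η ξ : ℂ) * f η ∂(sphereMeasure d)

/-- The Poisson transform `P_r u` of a real-valued function. -/
def poissonR (d : ℕ) (r : ℝ) (u : Sphere d → ℝ) (ξ : Sphere d) : ℝ :=
  ∫ η, spherePoissonKernel d r η ξ * u η ∂(sphereMeasure d)

section LegAux

open Polynomial


/-- iteratedDeriv of polynomial eval -/
lemma iterDeriv_polyEval (k : ℕ) : ∀ (p : ℝ[X]) (x : ℝ),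
    iteratedDeriv k (fun s => p.eval s) x = (derivative^[k] p).eval x := by
  induction k with
  | zero => intro p x; simp
  | succ k ih =>
    intro p x
    rw [iteratedDeriv_succ']
    have : deriv (fun s => p.eval s) = fun s => (derivative p).eval s := by
      funext s; exact Polynomial.deriv (p := p) (x := s)
    rw [this, ih, Function.iterate_succ_apply]

lemma iter_lin (b : ℝ) (j : ℕ) : ∀ (a : ℕ), a ≤ j →
    derivative^[a] ((X + C b : ℝ[X])^j) = C (j.descFactorial a : ℝ) * (X + C b)^(j - a) := by
  intro a
  induction a with
  | zero => intro _; simp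
  | succ a ih =>
    intro h
    rw [Function.iterate_succ_apply', ih (Nat.le_of_succ_le h), derivative_C_mul,
      derivative_pow]
    have hd : derivative (X + C b : ℝ[X]) = 1 := by simp
    rw [hd, mul_one]
    have he : j - a - 1 = j - (a + 1) := by omega
    have hc : (j.descFactorial (a+1) : ℝ) = ((j - a : ℕ) : ℝ) * (j.descFactorial a : ℝ) := by
      rw [Nat.descFactorial_succ]; push_cast; ring
    rw [he, hc, C_mul, C_eq_natCast, C_eq_natCast]
    ring

lemma iter_lin_zero (b : ℝ) (j a : ℕ) (h : j < a) :
    derivative^[a] ((X + C b : ℝ[X])^j) = 0 := by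
  apply Polynomial.iterate_derivative_eq_zero
  have h1 : ((X + C b : ℝ[X])^j).natDegree ≤ j * (X + C b : ℝ[X]).natDegree :=
    Polynomial.natDegree_pow_le
  have h2 : (X + C b : ℝ[X]).natDegree ≤ 1 := le_of_eq (Polynomial.natDegree_X_add_C b)
  have h3 : j * (X + C b : ℝ[X]).natDegree ≤ j * 1 := Nat.mul_le_mul_left j h2
  omega

lemma dF_le_factorial (j a : ℕ) : j.descFactorial a ≤ j.factorial := by
  rcases le_or_gt a j with h | h
  · calc j.descFactorial a ≤ (j - a).factorial * j.descFactorial a :=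
        Nat.le_mul_of_pos_left _ (Nat.factorial_pos _)
      _ = j.factorial := Nat.factorial_mul_descFactorial h
  · rw [Nat.descFactorial_eq_zero_iff_lt.2 h]; exact Nat.zero_le _

lemma evalA1 (j a : ℕ) : |((derivative^[a] ((X + C (-1:ℝ))^j)).eval 1)| ≤ (j.factorial : ℝ) := by
  rcases le_or_gt a j with h | h
  · rw [iter_lin _ _ _ h]
    simp only [eval_mul, eval_C, eval_pow, eval_add, eval_X]
    rw [show (1:ℝ) + -1 = 0 by ring]
    rw [abs_mul]
    calc |(j.descFactorial a : ℝ)| * |(0:ℝ)^(j-a)|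
        ≤ (j.factorial : ℝ) * 1 := by
          apply mul_le_mul
          · rw [abs_of_nonneg (by positivity)]
            exact_mod_cast dF_le_factorial j a
          · rcases Nat.eq_zero_or_pos (j - a) with h0 | h0
            · simp [h0]
            · rw [zero_pow (by omega : j - a ≠ 0)]; simp
          · positivity
          · positivity
      _ = j.factorial := mul_one _
  · rw [iter_lin_zero _ _ _ h]; simp

lemma evalA1_zero (j a : ℕ) (h : a < j) : ((derivative^[a] ((X + C (-1:ℝ))^j)).eval 1) = 0 := by
  rw [iter_lin _ _ _ (le_of_lt h)]
  simp only [eval_mul, eval_C, eval_pow, eval_add, eval_X]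
  rw [show (1:ℝ) + -1 = 0 by ring, zero_pow (by omega : j - a ≠ 0), mul_zero]

lemma evalA2 (j a : ℕ) : |((derivative^[a] ((X + C (1:ℝ))^j)).eval 1)| ≤ (j.factorial : ℝ) * 2^j := by
  rcases le_or_gt a j with h | h
  · rw [iter_lin _ _ _ h]
    simp only [eval_mul, eval_C, eval_pow, eval_add, eval_X]
    rw [show (1:ℝ) + 1 = 2 by ring, abs_mul]
    apply mul_le_mul
    · rw [abs_of_nonneg (by positivity)]
      exact_mod_cast dF_le_factorial j a
    · rw [abs_of_nonneg (by positivity)]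
      exact pow_le_pow_right₀ (by norm_num) (Nat.sub_le j a)
    · positivity
    · positivity
  · rw [iter_lin_zero _ _ _ h]; simp

lemma factored (j : ℕ) :
    ((1 : ℝ[X]) - X^2)^j = C ((-1:ℝ)^j) * ((X + C (-1:ℝ))^j * (X + C (1:ℝ))^j) := by
  rw [map_pow, ← mul_pow, ← mul_pow]
  congr 1
  simp only [map_neg, map_one]
  ring

lemma Ezero (j m : ℕ) (h : m < j) :
    ((derivative^[m] (((1:ℝ[X]) - X^2)^j)).eval 1) = 0 := by
  rw [factored, Polynomial.iterate_derivative_C_mul, Polynomial.iterate_derivative_mul]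
  rw [eval_mul, eval_C]
  rw [Polynomial.eval_finset_sum]
  have : ∀ b ∈ Finset.range m.succ,
      (eval 1 (m.choose b • ((derivative^[m - b] ((X + C (-1:ℝ))^j)) * derivative^[b] ((X + C (1:ℝ))^j)))) = 0 := by
    intro b hb
    rw [eval_smul, eval_mul, evalA1_zero j (m - b) (by omega), zero_mul, smul_zero]
  rw [Finset.sum_congr rfl this, Finset.sum_const_zero, mul_zero]

lemma Ebound (j m : ℕ) :
    |((derivative^[m] (((1:ℝ[X]) - X^2)^j)).eval 1)| ≤
      2^m * ((j.factorial : ℝ) * ((j.factorial : ℝ) * 2^j)) := by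
  rw [factored, Polynomial.iterate_derivative_C_mul, Polynomial.iterate_derivative_mul]
  rw [eval_mul, eval_C, Polynomial.eval_finset_sum, abs_mul, abs_pow, abs_neg, abs_one,
    one_pow, one_mul]
  calc |∑ b ∈ Finset.range m.succ,
        eval 1 (m.choose b • ((derivative^[m - b] ((X + C (-1:ℝ))^j)) * derivative^[b] ((X + C (1:ℝ))^j)))|
      ≤ ∑ b ∈ Finset.range m.succ,
        |eval 1 (m.choose b • ((derivative^[m - b] ((X + C (-1:ℝ))^j)) * derivative^[b] ((X + C (1:ℝ))^j)))| :=
        Finset.abs_sum_le_sum_abs _ _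
    _ ≤ ∑ b ∈ Finset.range m.succ,
        (m.choose b : ℝ) * ((j.factorial : ℝ) * ((j.factorial : ℝ) * 2^j)) := by
        apply Finset.sum_le_sum
        intro b _
        rw [eval_smul, eval_mul]
        rw [nsmul_eq_mul, abs_mul, abs_mul]
        rw [Nat.abs_cast]
        apply mul_le_mul_of_nonneg_left _ (by positivity)
        exact mul_le_mul (evalA1 j (m - b)) (evalA2 j b) (abs_nonneg _) (by positivity)
    _ = (∑ b ∈ Finset.range m.succ, (m.choose b : ℝ)) * ((j.factorial : ℝ) * ((j.factorial : ℝ) * 2^j)) := by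
        rw [Finset.sum_mul]
    _ = 2^m * ((j.factorial : ℝ) * ((j.factorial : ℝ) * 2^j)) := by
        congr 1
        rw [← Nat.cast_sum]
        rw [Nat.sum_range_choose]
        push_cast
        ring

lemma Tzero (k l j : ℕ) (h : k < j) :
    ((derivative^[k] (((1:ℝ[X]) - X^2)^j * X^(l - 2*j))).eval 1) = 0 := by
  rw [Polynomial.iterate_derivative_mul, Polynomial.eval_finset_sum]
  have : ∀ a ∈ Finset.range k.succ,
      (eval 1 (k.choose a • ((derivative^[k - a] (((1:ℝ[X]) - X^2)^j)) * derivative^[a] (X^(l - 2*j) : ℝ[X])))) = 0 := by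
    intro a _
    rw [eval_smul, eval_mul, Ezero j (k - a) (by omega), zero_mul, smul_zero]
  rw [Finset.sum_congr rfl this, Finset.sum_const_zero]

lemma Tbound (k l j : ℕ) (hl : 1 ≤ l) (hjk : j ≤ k) :
    |((derivative^[k] (((1:ℝ[X]) - X^2)^j * X^(l - 2*j))).eval 1)| ≤
      2^k * (2^k * ((j.factorial : ℝ) * ((j.factorial : ℝ) * 2^j))) * (l:ℝ)^(k - j) := by
  have hl1 : (1:ℝ) ≤ (l:ℝ) := by exact_mod_cast hl
  set K : ℝ := (j.factorial : ℝ) * ((j.factorial : ℝ) * 2^j) with hK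
  have hK0 : 0 ≤ K := by positivity
  rw [Polynomial.iterate_derivative_mul, Polynomial.eval_finset_sum]
  calc |∑ a ∈ Finset.range k.succ,
        eval 1 (k.choose a • ((derivative^[k - a] (((1:ℝ[X]) - X^2)^j)) * derivative^[a] (X^(l - 2*j) : ℝ[X])))|
      ≤ ∑ a ∈ Finset.range k.succ,
        |eval 1 (k.choose a • ((derivative^[k - a] (((1:ℝ[X]) - X^2)^j)) * derivative^[a] (X^(l - 2*j) : ℝ[X])))| :=
        Finset.abs_sum_le_sum_abs _ _
    _ ≤ ∑ a ∈ Finset.range k.succ, (k.choose a : ℝ) * (2^k * K * (l:ℝ)^(k - j)) := by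
        apply Finset.sum_le_sum
        intro a ha
        rw [Finset.mem_range, Nat.lt_succ_iff] at ha
        rw [eval_smul, eval_mul, nsmul_eq_mul, abs_mul, abs_mul, Nat.abs_cast]
        apply mul_le_mul_of_nonneg_left _ (by positivity)
        rcases lt_or_ge (k - a) j with hcase | hcase
        · rw [Ezero j (k - a) hcase, abs_zero, zero_mul]
          positivity
        · have haj : a ≤ k - j := by omega
          have h1 : |eval 1 (derivative^[k - a] (((1:ℝ[X]) - X^2)^j))| ≤ 2^k * K := by
            calc |eval 1 (derivative^[k - a] (((1:ℝ[X]) - X^2)^j))| ≤ 2^(k-a) * K := Ebound j (k - a)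
              _ ≤ 2^k * K := by
                  apply mul_le_mul_of_nonneg_right _ hK0
                  exact pow_le_pow_right₀ (by norm_num) (by omega)
          have h2 : |eval 1 (derivative^[a] (X^(l - 2*j) : ℝ[X]))| ≤ (l:ℝ)^(k - j) := by
            rw [Polynomial.iterate_derivative_X_pow_eq_C_mul, eval_mul, eval_C, eval_pow, eval_X,
              one_pow, mul_one]
            rw [abs_of_nonneg (by positivity)]
            calc ((l - 2*j).descFactorial a : ℝ) ≤ ((l - 2*j)^a : ℕ) := by
                  exact_mod_cast Nat.descFactorial_le_pow _ _
              _ ≤ ((l^a : ℕ) : ℝ) := by exact_mod_cast Nat.pow_le_pow_left (Nat.sub_le _ _) a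
              _ = (l:ℝ)^a := by push_cast; ring
              _ ≤ (l:ℝ)^(k - j) := pow_le_pow_right₀ hl1 haj
          calc |eval 1 (derivative^[k - a] (((1:ℝ[X]) - X^2)^j))| * |eval 1 (derivative^[a] (X^(l - 2*j) : ℝ[X]))|
              ≤ (2^k * K) * (l:ℝ)^(k - j) :=
                mul_le_mul h1 h2 (abs_nonneg _) (by positivity)
            _ = 2^k * K * (l:ℝ)^(k - j) := by ring
    _ = (∑ a ∈ Finset.range k.succ, (k.choose a : ℝ)) * (2^k * K * (l:ℝ)^(k - j)) := by
        rw [Finset.sum_mul]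
    _ = 2^k * (2^k * K) * (l:ℝ)^(k - j) := by
        rw [← Nat.cast_sum, Nat.sum_range_choose]
        push_cast
        ring


def legPoly (d l : ℕ) : ℝ[X] :=
  C ((l.factorial : ℝ) * Real.Gamma (((d:ℝ)-1)/2)) *
    ∑ j ∈ Finset.range (l / 2 + 1),
      C ((-1:ℝ)^j / (4^j * (j.factorial:ℝ) * ((l - 2*j).factorial : ℝ) *
          Real.Gamma ((j:ℝ) + ((d:ℝ)-1)/2))) * (((1:ℝ[X]) - X^2)^j * X^(l - 2*j))

lemma LegendrePtest_eval (d l : ℕ) (s : ℝ) :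
    (l.factorial : ℝ) * Real.Gamma (((d : ℝ) - 1) / 2) *
    ∑ j ∈ Finset.range (l / 2 + 1),
      (-1) ^ j * (1 - s ^ 2) ^ j * s ^ (l - 2 * j) /
        (4 ^ j * (j.factorial : ℝ) * ((l - 2 * j).factorial : ℝ) *
          Real.Gamma ((j : ℝ) + ((d : ℝ) - 1) / 2)) = (legPoly d l).eval s := by
  unfold legPoly
  rw [eval_mul, eval_C, Polynomial.eval_finset_sum]
  congr 1
  refine Finset.sum_congr rfl fun j _ => ?_
  simp only [eval_mul, eval_C, eval_pow, eval_sub, eval_one, eval_X]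
  ring

lemma term_bound (d k l j : ℕ) (hd : 2 ≤ d) (hl : 1 ≤ l) (hjl : 2 * j ≤ l) :
    |((l.factorial : ℝ) * Real.Gamma (((d:ℝ)-1)/2)) *
      (((-1:ℝ)^j / (4^j * (j.factorial:ℝ) * ((l - 2*j).factorial : ℝ) *
          Real.Gamma ((j:ℝ) + ((d:ℝ)-1)/2))) *
        ((derivative^[k] (((1:ℝ[X]) - X^2)^j * X^(l - 2*j))).eval 1))| ≤
      (if j ≤ k then
        Real.Gamma (((d:ℝ)-1)/2) / (4^j * (j.factorial:ℝ) * Real.Gamma ((j:ℝ) + ((d:ℝ)-1)/2)) *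
          (2^k * (2^k * ((j.factorial : ℝ) * ((j.factorial : ℝ) * 2^j)))) * (l:ℝ)^(2*k)
       else 0) := by
  have hd2 : (2:ℝ) ≤ (d:ℝ) := by exact_mod_cast hd
  have hΓ0 : 0 < Real.Gamma (((d:ℝ)-1)/2) := Real.Gamma_pos_of_pos (by linarith)
  have hΓj : 0 < Real.Gamma ((j:ℝ) + ((d:ℝ)-1)/2) := by
    apply Real.Gamma_pos_of_pos
    have : (0:ℝ) ≤ (j:ℝ) := Nat.cast_nonneg j
    linarith
  have hl1 : (1:ℝ) ≤ (l:ℝ) := by exact_mod_cast hl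
  by_cases hjk : j ≤ k
  · rw [if_pos hjk]
    have hE := Tbound k l j hl hjk
    set E : ℝ := (derivative^[k] (((1:ℝ[X]) - X^2)^j * X^(l - 2*j))).eval 1 with hEdef
    set B : ℝ := 2^k * (2^k * ((j.factorial : ℝ) * ((j.factorial : ℝ) * 2^j))) with hBdef
    have hD : (0:ℝ) < 4^j * (j.factorial:ℝ) * ((l - 2*j).factorial : ℝ) *
        Real.Gamma ((j:ℝ) + ((d:ℝ)-1)/2) := by positivity
    have habs : |((l.factorial : ℝ) * Real.Gamma (((d:ℝ)-1)/2)) *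
        (((-1:ℝ)^j / (4^j * (j.factorial:ℝ) * ((l - 2*j).factorial : ℝ) *
            Real.Gamma ((j:ℝ) + ((d:ℝ)-1)/2))) * E)| =
        ((l.factorial : ℝ) * Real.Gamma (((d:ℝ)-1)/2)) *
          ((1 / (4^j * (j.factorial:ℝ) * ((l - 2*j).factorial : ℝ) *
            Real.Gamma ((j:ℝ) + ((d:ℝ)-1)/2))) * |E|) := by
      rw [abs_mul, abs_mul, abs_mul, abs_div, abs_pow, abs_neg, abs_one, one_pow,
        abs_of_pos hD, abs_of_pos hΓ0, Nat.abs_cast]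
    rw [habs]
    have hfact : (l.factorial : ℝ) ≤ ((l - 2*j).factorial : ℝ) * (l:ℝ)^(2*j) := by
      have h1 : (l - 2*j).factorial * l.descFactorial (2*j) = l.factorial :=
        Nat.factorial_mul_descFactorial hjl
      have h2 : (l.descFactorial (2*j) : ℝ) ≤ (l:ℝ)^(2*j) := by
        exact_mod_cast Nat.descFactorial_le_pow l (2*j)
      calc (l.factorial : ℝ) = ((l - 2*j).factorial : ℝ) * (l.descFactorial (2*j) : ℝ) := by
            exact_mod_cast (congrArg (fun n : ℕ => (n:ℝ)) h1).symm
        _ ≤ ((l - 2*j).factorial : ℝ) * (l:ℝ)^(2*j) :=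
            mul_le_mul_of_nonneg_left h2 (by positivity)
    calc ((l.factorial : ℝ) * Real.Gamma (((d:ℝ)-1)/2)) *
          ((1 / (4^j * (j.factorial:ℝ) * ((l - 2*j).factorial : ℝ) *
            Real.Gamma ((j:ℝ) + ((d:ℝ)-1)/2))) * |E|)
        ≤ ((((l - 2*j).factorial : ℝ) * (l:ℝ)^(2*j)) * Real.Gamma (((d:ℝ)-1)/2)) *
          ((1 / (4^j * (j.factorial:ℝ) * ((l - 2*j).factorial : ℝ) *
            Real.Gamma ((j:ℝ) + ((d:ℝ)-1)/2))) * (B * (l:ℝ)^(k-j))) := by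
          gcongr
      _ = Real.Gamma (((d:ℝ)-1)/2) / (4^j * (j.factorial:ℝ) *
            Real.Gamma ((j:ℝ) + ((d:ℝ)-1)/2)) * B * ((l:ℝ)^(2*j) * (l:ℝ)^(k-j)) := by
          have hFD : ((l - 2*j).factorial : ℝ) *
              (1 / (4^j * (j.factorial:ℝ) * ((l - 2*j).factorial : ℝ) *
                Real.Gamma ((j:ℝ) + ((d:ℝ)-1)/2))) =
              1 / (4^j * (j.factorial:ℝ) * Real.Gamma ((j:ℝ) + ((d:ℝ)-1)/2)) := by
            have h4 : (4:ℝ)^j ≠ 0 := by positivity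
            have h5 : (j.factorial:ℝ) ≠ 0 := by positivity
            have h6 : ((l - 2*j).factorial : ℝ) ≠ 0 := by positivity
            have h7 : Real.Gamma ((j:ℝ) + ((d:ℝ)-1)/2) ≠ 0 := ne_of_gt hΓj
            rw [show (4^j * (j.factorial:ℝ) * ((l - 2*j).factorial : ℝ) *
                Real.Gamma ((j:ℝ) + ((d:ℝ)-1)/2)) = ((l - 2*j).factorial : ℝ) *
                (4^j * (j.factorial:ℝ) * Real.Gamma ((j:ℝ) + ((d:ℝ)-1)/2)) from by ring]
            rw [one_div, mul_inv, ← mul_assoc, mul_inv_cancel₀ h6, one_mul, one_div]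
          calc (((l - 2*j).factorial : ℝ) * (l:ℝ)^(2*j)) * Real.Gamma (((d:ℝ)-1)/2) *
              ((1 / (4^j * (j.factorial:ℝ) * ((l - 2*j).factorial : ℝ) *
                Real.Gamma ((j:ℝ) + ((d:ℝ)-1)/2))) * (B * (l:ℝ)^(k-j)))
              = (((l - 2*j).factorial : ℝ) *
                  (1 / (4^j * (j.factorial:ℝ) * ((l - 2*j).factorial : ℝ) *
                    Real.Gamma ((j:ℝ) + ((d:ℝ)-1)/2)))) *
                (Real.Gamma (((d:ℝ)-1)/2) * B * ((l:ℝ)^(2*j) * (l:ℝ)^(k-j))) := by ring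
            _ = (1 / (4^j * (j.factorial:ℝ) * Real.Gamma ((j:ℝ) + ((d:ℝ)-1)/2))) *
                (Real.Gamma (((d:ℝ)-1)/2) * B * ((l:ℝ)^(2*j) * (l:ℝ)^(k-j))) := by rw [hFD]
            _ = Real.Gamma (((d:ℝ)-1)/2) / (4^j * (j.factorial:ℝ) *
                  Real.Gamma ((j:ℝ) + ((d:ℝ)-1)/2)) * B * ((l:ℝ)^(2*j) * (l:ℝ)^(k-j)) := by ring
      _ ≤ Real.Gamma (((d:ℝ)-1)/2) / (4^j * (j.factorial:ℝ) *
            Real.Gamma ((j:ℝ) + ((d:ℝ)-1)/2)) * B * (l:ℝ)^(2*k) := by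
          apply mul_le_mul_of_nonneg_left _ (by positivity)
          rw [← pow_add]
          exact pow_le_pow_right₀ hl1 (by omega)
  · rw [if_neg hjk]
    rw [Tzero k l j (by omega), mul_zero, mul_zero, abs_zero]


end LegAux

open Polynomial in
/-- The Taylor coefficients of the Legendre polynomials satisfy `|c_(k,l)| ≲ l^(2k)`. -/
theorem legCoeff_le
    (d : ℕ) (hd : 2 ≤ d) (k : ℕ) :
    ∃ C : ℝ, 0 < C ∧ ∀ l : ℕ, 1 ≤ l → |legCoeff d k l| ≤ C * (l : ℝ) ^ (2 * k) := by
  have hd2 : (2:ℝ) ≤ (d:ℝ) := by exact_mod_cast hd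
  have hΓ0 : 0 < Real.Gamma (((d:ℝ)-1)/2) := Real.Gamma_pos_of_pos (by linarith)
  have hΓj : ∀ j : ℕ, 0 < Real.Gamma ((j:ℝ) + ((d:ℝ)-1)/2) := by
    intro j
    apply Real.Gamma_pos_of_pos
    have : (0:ℝ) ≤ (j:ℝ) := Nat.cast_nonneg j
    linarith
  have hc'0 : ∀ j : ℕ, 0 ≤ Real.Gamma (((d:ℝ)-1)/2) / (4^j * (j.factorial:ℝ) *
      Real.Gamma ((j:ℝ) + ((d:ℝ)-1)/2)) *
      (2^k * (2^k * ((j.factorial : ℝ) * ((j.factorial : ℝ) * 2^j)))) := by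
    intro j
    have h1 := hΓ0
    have h2 := hΓj j
    positivity
  have hS : 0 ≤ ∑ j ∈ Finset.range (k+1),
      Real.Gamma (((d:ℝ)-1)/2) / (4^j * (j.factorial:ℝ) *
        Real.Gamma ((j:ℝ) + ((d:ℝ)-1)/2)) *
        (2^k * (2^k * ((j.factorial : ℝ) * ((j.factorial : ℝ) * 2^j)))) :=
    Finset.sum_nonneg fun j _ => hc'0 j
  refine ⟨1 + ∑ j ∈ Finset.range (k+1),
      Real.Gamma (((d:ℝ)-1)/2) / (4^j * (j.factorial:ℝ) *
        Real.Gamma ((j:ℝ) + ((d:ℝ)-1)/2)) *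
        (2^k * (2^k * ((j.factorial : ℝ) * ((j.factorial : ℝ) * 2^j)))), by linarith, ?_⟩
  intro l hl
  have hl1 : (1:ℝ) ≤ (l:ℝ) := by exact_mod_cast hl
  have hrep : iteratedDeriv k (LegendreP d l) 1 = (derivative^[k] (legPoly d l)).eval 1 := by
    have hfun : LegendreP d l = fun s => (legPoly d l).eval s := by
      funext s
      unfold LegendreP
      exact LegendrePtest_eval d l s
    rw [hfun, iterDeriv_polyEval]
  have hexp : (derivative^[k] (legPoly d l)).eval 1 =
      ((l.factorial : ℝ) * Real.Gamma (((d:ℝ)-1)/2)) *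
        ∑ j ∈ Finset.range (l / 2 + 1),
          ((-1:ℝ)^j / (4^j * (j.factorial:ℝ) * ((l - 2*j).factorial : ℝ) *
              Real.Gamma ((j:ℝ) + ((d:ℝ)-1)/2))) *
            ((derivative^[k] (((1:ℝ[X]) - X^2)^j * X^(l - 2*j))).eval 1) := by
    unfold legPoly
    rw [Polynomial.iterate_derivative_C_mul, Polynomial.eval_mul, Polynomial.eval_C]
    congr 1
    rw [Polynomial.iterate_derivative_sum, Polynomial.eval_finset_sum]
    refine Finset.sum_congr rfl fun j _ => ?_
    rw [Polynomial.iterate_derivative_C_mul, Polynomial.eval_mul, Polynomial.eval_C]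
  have h0 : |legCoeff d k l| ≤ |iteratedDeriv k (LegendreP d l) 1| := by
    unfold legCoeff
    rw [abs_div, abs_mul, abs_pow, abs_neg, abs_one, one_pow, one_mul, Nat.abs_cast]
    exact div_le_self (abs_nonneg _) (by exact_mod_cast Nat.factorial_pos k)
  calc |legCoeff d k l| ≤ |iteratedDeriv k (LegendreP d l) 1| := h0
    _ = |((l.factorial : ℝ) * Real.Gamma (((d:ℝ)-1)/2)) *
        ∑ j ∈ Finset.range (l / 2 + 1),
          ((-1:ℝ)^j / (4^j * (j.factorial:ℝ) * ((l - 2*j).factorial : ℝ) *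
              Real.Gamma ((j:ℝ) + ((d:ℝ)-1)/2))) *
            ((derivative^[k] (((1:ℝ[X]) - X^2)^j * X^(l - 2*j))).eval 1)| := by
        rw [hrep, hexp]
    _ = |∑ j ∈ Finset.range (l / 2 + 1),
          ((l.factorial : ℝ) * Real.Gamma (((d:ℝ)-1)/2)) *
          (((-1:ℝ)^j / (4^j * (j.factorial:ℝ) * ((l - 2*j).factorial : ℝ) *
              Real.Gamma ((j:ℝ) + ((d:ℝ)-1)/2))) *
            ((derivative^[k] (((1:ℝ[X]) - X^2)^j * X^(l - 2*j))).eval 1))| := by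
        rw [Finset.mul_sum]
    _ ≤ ∑ j ∈ Finset.range (l / 2 + 1),
          |((l.factorial : ℝ) * Real.Gamma (((d:ℝ)-1)/2)) *
          (((-1:ℝ)^j / (4^j * (j.factorial:ℝ) * ((l - 2*j).factorial : ℝ) *
              Real.Gamma ((j:ℝ) + ((d:ℝ)-1)/2))) *
            ((derivative^[k] (((1:ℝ[X]) - X^2)^j * X^(l - 2*j))).eval 1))| :=
        Finset.abs_sum_le_sum_abs _ _
    _ ≤ ∑ j ∈ Finset.range (l / 2 + 1),
          (if j ≤ k then
            Real.Gamma (((d:ℝ)-1)/2) / (4^j * (j.factorial:ℝ) *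
              Real.Gamma ((j:ℝ) + ((d:ℝ)-1)/2)) *
              (2^k * (2^k * ((j.factorial : ℝ) * ((j.factorial : ℝ) * 2^j)))) * (l:ℝ)^(2*k)
           else 0) := by
        apply Finset.sum_le_sum
        intro j hj
        have hjl : 2*j ≤ l := by
          rw [Finset.mem_range] at hj
          omega
        exact term_bound d k l j hd hl hjl
    _ ≤ (∑ j ∈ Finset.range (k+1),
          Real.Gamma (((d:ℝ)-1)/2) / (4^j * (j.factorial:ℝ) *
            Real.Gamma ((j:ℝ) + ((d:ℝ)-1)/2)) *
            (2^k * (2^k * ((j.factorial : ℝ) * ((j.factorial : ℝ) * 2^j))))) * (l:ℝ)^(2*k) := by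
        rw [← Finset.sum_filter, ← Finset.sum_mul]
        apply mul_le_mul_of_nonneg_right _ (by positivity)
        apply Finset.sum_le_sum_of_subset_of_nonneg
        · intro j hj
          simp only [Finset.mem_filter, Finset.mem_range] at hj ⊢
          omega
        · intro j _ _
          exact hc'0 j
    _ ≤ (1 + ∑ j ∈ Finset.range (k+1),
          Real.Gamma (((d:ℝ)-1)/2) / (4^j * (j.factorial:ℝ) *
            Real.Gamma ((j:ℝ) + ((d:ℝ)-1)/2)) *
            (2^k * (2^k * ((j.factorial : ℝ) * ((j.factorial : ℝ) * 2^j))))) * (l:ℝ)^(2*k) := by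
        apply mul_le_mul_of_nonneg_right _ (by positivity)
        linarith


end
end

section
/- Let d ≥ 2, n ∈ ℕ with n ≥ 1, and let l ≥ n be an integer. Then for every ε ∈ (0,1) and every s with 1 − ε·k_{d,n}(l) ≤ s ≤ 1, it holds that P_{l,d}^{(n)}(s) ≥ (1−ε)·P_{l,d}^{(n)}(1) > 0. -/
open MeasureTheory Real Filter
open scoped ENNReal NNReal ComplexConjugate

noncomputable section

lemma legP_hasDerivAt (d l : ℕ) (hd : 2 ≤ d) (hl : 1 ≤ l) (s : ℝ) :
    HasDerivAt (LegendreP d l)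
      ((l : ℝ) * ((l : ℝ) + (d : ℝ) - 2) / ((d : ℝ) - 1) * LegendreP (d + 2) (l - 1) s) s := by
  have hd2 : (2:ℝ) ≤ (d:ℝ) := by exact_mod_cast hd
  set lam : ℝ := ((d : ℝ) - 1) / 2 with hlam
  have hlampos : 0 < lam := by rw [hlam]; linarith
  have hdlam : (d : ℝ) = 2 * lam + 1 := by rw [hlam]; ring
  have hGne : ∀ x : ℝ, 0 ≤ x → Real.Gamma (x + lam) ≠ 0 := fun x hx =>
    (Real.Gamma_pos_of_pos (add_pos_of_nonneg_of_pos hx hlampos)).ne'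
  set c : ℕ → ℝ := fun k =>
    4 ^ k * (k.factorial : ℝ) * ((l - 2 * k).factorial : ℝ) * Real.Gamma ((k : ℝ) + lam) with hc
  set V1 : ℕ → ℝ := fun k =>
    ((-1:ℝ)^k * (((k : ℝ) * (1 - s ^ 2) ^ (k - 1) * (-(2 * s))) * s ^ (l - 2 * k))) / c k with hV1
  set V2 : ℕ → ℝ := fun k =>
    ((-1:ℝ)^k * ((1 - s ^ 2) ^ k * (((l - 2 * k : ℕ) : ℝ) * s ^ (l - 2 * k - 1)))) / c k with hV2
  set D : ℕ → ℝ := fun k =>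
      ((-1:ℝ) ^ k * (((k : ℝ) * (1 - s ^ 2) ^ (k - 1) * (-(2 * s))) * s ^ (l - 2 * k)
          + (1 - s ^ 2) ^ k * (((l - 2 * k : ℕ) : ℝ) * s ^ (l - 2 * k - 1)))) / c k
    with hD
  have hterm : ∀ k : ℕ, HasDerivAt
      (fun s : ℝ => (-1) ^ k * (1 - s ^ 2) ^ k * s ^ (l - 2 * k) / c k) (D k) s := by
    intro k
    have h1 : HasDerivAt (fun s : ℝ => 1 - s ^ 2) (-(2 * s)) s := by
      have := (hasDerivAt_pow 2 s).const_sub 1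
      simpa using this
    have h2 : HasDerivAt (fun s : ℝ => (1 - s ^ 2) ^ k)
        ((k : ℝ) * (1 - s ^ 2) ^ (k - 1) * (-(2 * s))) s := h1.pow k
    have h3 := h2.mul (hasDerivAt_pow (l - 2 * k) s)
    have h4 := (h3.const_mul ((-1:ℝ) ^ k)).div_const (c k)
    exact h4.congr_of_eventuallyEq (Filter.Eventually.of_forall fun t => by
      simp only [Pi.mul_apply]; ring)
  have hsum : HasDerivAt
      (fun t : ℝ => ∑ k ∈ Finset.range (l / 2 + 1),
        (-1) ^ k * (1 - t ^ 2) ^ k * t ^ (l - 2 * k) / c k)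
      (∑ k ∈ Finset.range (l / 2 + 1), D k) s := HasDerivAt.fun_sum (fun k _ => hterm k)
  have hfull := hsum.const_mul ((l.factorial : ℝ) * Real.Gamma lam)
  have hDsplit : ∀ k ∈ Finset.range (l / 2 + 1), D k = V1 k + V2 k := by
    intro k _
    simp only [hD, hV1, hV2]; ring
  have hV10 : V1 0 = 0 := by simp [hV1]
  have hDsum : ∑ k ∈ Finset.range (l / 2 + 1), D k
      = (∑ j ∈ Finset.range (l / 2), V1 (j + 1)) + ∑ k ∈ Finset.range (l / 2 + 1), V2 k := by
    rw [Finset.sum_congr rfl hDsplit, Finset.sum_add_distrib]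
    congr 1
    rw [Finset.sum_range_succ', hV10, add_zero]
  have hc2 : (((d:ℕ)+2 : ℕ) : ℝ) = (d:ℝ) + 2 := by push_cast; ring
  have heq : ((l.factorial : ℝ) * Real.Gamma lam) * ∑ k ∈ Finset.range (l / 2 + 1), D k
      = (l : ℝ) * ((l : ℝ) + (d : ℝ) - 2) / ((d : ℝ) - 1) * LegendreP (d + 2) (l - 1) s := by
    rw [hDsum]
    unfold LegendreP
    have hg2 : ((((d + 2 : ℕ)) : ℝ) - 1) / 2 = lam + 1 := by push_cast; rw [hlam]; ring
    rw [hg2]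
    rw [Finset.mul_sum, Finset.mul_sum]
    rcases Nat.even_or_odd l with he | ho
    · -- l even
      obtain ⟨m, hm⟩ := he
      have hm1 : 1 ≤ m := by omega
      have h2 : l / 2 = m := by omega
      have h3 : (l - 1) / 2 + 1 = m := by omega
      rw [h2, h3, Finset.sum_range_succ]
      have hV2m : V2 m = 0 := by
        simp [hV2, show l - 2 * m = 0 from by omega]
      rw [hV2m, add_zero, ← Finset.sum_add_distrib, Finset.mul_sum]
      refine Finset.sum_congr rfl (fun j hj => ?_)
      have hj2 : 2 * j + 2 ≤ l := by
        have := Finset.mem_range.mp hj; omega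
      obtain ⟨u, hu⟩ : ∃ u, l = 2 * j + 2 + u := ⟨l - (2 * j + 2), by omega⟩
      simp only [hV1, hV2, hc, Nat.add_sub_cancel]
      rw [show l - 2 * j - 1 = u + 1 from by omega, show l - 2 * (j + 1) = u from by omega,
        show l - 2 * j = u + 2 from by omega, show l - 1 - 2 * j = u + 1 from by omega]
      rw [hu, hdlam]
      rw [show 2 * j + 2 + u - 1 = 2 * j + 1 + u from by omega]
      rw [show (2 * j + 2 + u) = (2 * j + 1 + u) + 1 from by ring, Nat.factorial_succ (2 * j + 1 + u)]
      rw [show (u + 2) = (u + 1) + 1 from rfl, Nat.factorial_succ (u + 1), Nat.factorial_succ u,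
        Nat.factorial_succ j]
      have hjlam : (0:ℝ) < (j:ℝ) + lam := add_pos_of_nonneg_of_pos (Nat.cast_nonneg j) hlampos
      have e1 : ((j + 1 : ℕ):ℝ) + lam = ((j:ℝ) + lam) + 1 := by push_cast; ring
      have e2 : (j:ℝ) + (lam + 1) = ((j:ℝ) + lam) + 1 := by ring
      rw [e1, e2, Real.Gamma_add_one hjlam.ne', Real.Gamma_add_one hlampos.ne']
      have hG : Real.Gamma ((j:ℝ) + lam) ≠ 0 := (Real.Gamma_pos_of_pos hjlam).ne'
      have hGl : Real.Gamma lam ≠ 0 := (Real.Gamma_pos_of_pos hlampos).ne'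
      push_cast
      field_simp
      ring
    · -- l odd
      obtain ⟨m, hm⟩ := ho
      have h2 : l / 2 = m := by omega
      have h3 : (l - 1) / 2 + 1 = m + 1 := by omega
      rw [h2, h3, Finset.sum_range_succ, Finset.sum_range_succ (n := m)]
      have hsplitlhs :
          ((l.factorial : ℝ) * Real.Gamma lam) *
            ((∑ j ∈ Finset.range m, V1 (j + 1)) + ((∑ k ∈ Finset.range m, V2 k) + V2 m))
          = (∑ j ∈ Finset.range m,
              ((l.factorial : ℝ) * Real.Gamma lam) * (V1 (j + 1) + V2 j))
            + ((l.factorial : ℝ) * Real.Gamma lam) * V2 m := by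
        calc ((l.factorial : ℝ) * Real.Gamma lam) *
            ((∑ j ∈ Finset.range m, V1 (j + 1)) + ((∑ k ∈ Finset.range m, V2 k) + V2 m))
            = ((l.factorial : ℝ) * Real.Gamma lam) *
              (∑ j ∈ Finset.range m, (V1 (j + 1) + V2 j))
              + ((l.factorial : ℝ) * Real.Gamma lam) * V2 m := by
                rw [Finset.sum_add_distrib]; ring
          _ = _ := by rw [Finset.mul_sum]
      rw [hsplitlhs]
      congr 1
      · refine Finset.sum_congr rfl (fun j hj => ?_)
        have hj2 : 2 * j + 2 ≤ l := by
          have := Finset.mem_range.mp hj; omega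
        obtain ⟨u, hu⟩ : ∃ u, l = 2 * j + 2 + u := ⟨l - (2 * j + 2), by omega⟩
        simp only [hV1, hV2, hc, Nat.add_sub_cancel]
        rw [show l - 2 * j - 1 = u + 1 from by omega, show l - 2 * (j + 1) = u from by omega,
          show l - 2 * j = u + 2 from by omega, show l - 1 - 2 * j = u + 1 from by omega]
        rw [hu, hdlam]
        rw [show 2 * j + 2 + u - 1 = 2 * j + 1 + u from by omega]
        rw [show (2 * j + 2 + u) = (2 * j + 1 + u) + 1 from by ring, Nat.factorial_succ (2 * j + 1 + u)]
        rw [show (u + 2) = (u + 1) + 1 from rfl, Nat.factorial_succ (u + 1), Nat.factorial_succ u,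
          Nat.factorial_succ j]
        have hjlam : (0:ℝ) < (j:ℝ) + lam := add_pos_of_nonneg_of_pos (Nat.cast_nonneg j) hlampos
        have e1 : ((j + 1 : ℕ):ℝ) + lam = ((j:ℝ) + lam) + 1 := by push_cast; ring
        have e2 : (j:ℝ) + (lam + 1) = ((j:ℝ) + lam) + 1 := by ring
        rw [e1, e2, Real.Gamma_add_one hjlam.ne', Real.Gamma_add_one hlampos.ne']
        have hG : Real.Gamma ((j:ℝ) + lam) ≠ 0 := (Real.Gamma_pos_of_pos hjlam).ne'
        have hGl : Real.Gamma lam ≠ 0 := (Real.Gamma_pos_of_pos hlampos).ne'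
        push_cast
        field_simp
        ring
      · -- top term, l = 2m+1
        simp only [hV2, hc]
        rw [show l - 2 * m - 1 = 0 from by omega, show l - 2 * m = 1 from by omega,
          show l - 1 - 2 * m = 0 from by omega]
        rw [hm, hdlam]
        rw [show 2 * m + 1 - 1 = 2 * m from by omega]
        rw [Nat.factorial_succ (2 * m)]
        have hjlam : (0:ℝ) < (m:ℝ) + lam := add_pos_of_nonneg_of_pos (Nat.cast_nonneg m) hlampos
        have e2 : (m:ℝ) + (lam + 1) = ((m:ℝ) + lam) + 1 := by ring
        rw [e2, Real.Gamma_add_one hjlam.ne', Real.Gamma_add_one hlampos.ne']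
        have hG : Real.Gamma ((m:ℝ) + lam) ≠ 0 := (Real.Gamma_pos_of_pos hjlam).ne'
        have hGl : Real.Gamma lam ≠ 0 := (Real.Gamma_pos_of_pos hlampos).ne'
        push_cast
        field_simp
        ring
  rw [← heq]
  exact hfull

lemma legP_gamma_ne (d : ℕ) (hd : 2 ≤ d) : Real.Gamma (((d : ℝ) - 1) / 2) ≠ 0 := by
  have h2 : (2:ℝ) ≤ d := by exact_mod_cast hd
  exact (Real.Gamma_pos_of_pos (by linarith)).ne'

lemma legP_at_one (d l : ℕ) (hd : 2 ≤ d) : LegendreP d l 1 = 1 := by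
  have hg := legP_gamma_ne d hd
  unfold LegendreP
  rw [Finset.sum_eq_single 0]
  · simp only [pow_zero, one_mul, Nat.sub_zero, Nat.mul_zero, Nat.factorial_zero, one_pow,
      Nat.cast_zero, zero_add, Nat.cast_one]
    field_simp
  · intro k _ hk0
    simp [zero_pow hk0]
  · intro h; simp at h
lemma legP_deg_zero (d : ℕ) (hd : 2 ≤ d) (s : ℝ) : LegendreP d 0 s = 1 := by
  have hg := legP_gamma_ne d hd
  unfold LegendreP
  simp only [Nat.zero_div, zero_add, Finset.sum_range_one]
  simp
  field_simp
lemma legP_deg_one (d : ℕ) (hd : 2 ≤ d) (s : ℝ) : LegendreP d 1 s = s := by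
  have hg := legP_gamma_ne d hd
  unfold LegendreP
  simp only [Nat.reduceDiv, zero_add, Finset.sum_range_one]
  simp
  field_simp

lemma legP_bounds (l : ℕ) (hl : 1 ≤ l) : ∀ d : ℕ, 2 ≤ d → ∀ σ : ℝ, σ ≤ 1 →
    (1 - σ) * ((l:ℝ) * ((l:ℝ) + (d:ℝ) - 2) / ((d:ℝ) - 1)) ≤ 1 →
    1 - (1 - σ) * ((l:ℝ) * ((l:ℝ) + (d:ℝ) - 2) / ((d:ℝ) - 1)) ≤ LegendreP d l σ ∧
      LegendreP d l σ ≤ 1 := by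
  induction l, hl using Nat.le_induction with
  | base =>
    intro d hd σ hσ1 hσc
    have hd2 : (2:ℝ) ≤ (d:ℝ) := by exact_mod_cast hd
    have hc1 : ((1:ℕ):ℝ) * (((1:ℕ):ℝ) + (d:ℝ) - 2) / ((d:ℝ) - 1) = 1 := by
      push_cast
      rw [show (1:ℝ) * (1 + (d:ℝ) - 2) = (d:ℝ) - 1 by ring,
        div_self (by linarith : (d:ℝ) - 1 ≠ 0)]
    rw [hc1] at hσc ⊢
    rw [legP_deg_one d hd σ]
    constructor <;> linarith
  | succ l hl IH =>
    intro d hd σ hσ1 hσc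
    have hd2 : (2:ℝ) ≤ (d:ℝ) := by exact_mod_cast hd
    have hl1 : (1:ℝ) ≤ (l:ℝ) := by exact_mod_cast hl
    set c : ℝ := ((l+1:ℕ):ℝ) * (((l+1:ℕ):ℝ) + (d:ℝ) - 2) / ((d:ℝ) - 1) with hcdef
    have hcval : c = ((l:ℝ)+1) * ((l:ℝ)+1 + (d:ℝ) - 2) / ((d:ℝ) - 1) := by
      rw [hcdef]; push_cast; ring
    have hcpos : 0 < c := by
      rw [hcval]
      apply div_pos
      · apply mul_pos <;> linarith
      · linarith
    set c' : ℝ := (l:ℝ) * ((l:ℝ) + ((d+2:ℕ):ℝ) - 2) / (((d+2:ℕ):ℝ) - 1) with hc'def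
    have hc'val : c' = (l:ℝ) * ((l:ℝ) + (d:ℝ)) / ((d:ℝ) + 1) := by
      rw [hc'def]; push_cast; ring
    have hc'pos : 0 < c' := by
      rw [hc'val]
      apply div_pos
      · apply mul_pos <;> linarith
      · linarith
    have hcc' : c' ≤ c := by
      rw [hcval, hc'val]
      rw [div_le_div_iff₀ (by linarith) (by linarith)]
      nlinarith
    -- derivative of LegendreP d (l+1)
    have hder : ∀ τ : ℝ, HasDerivAt (LegendreP d (l+1)) (c * LegendreP (d+2) l τ) τ := by
      intro τ
      have := legP_hasDerivAt d (l+1) hd (by omega) τ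
      simpa only [Nat.add_sub_cancel, hcdef] using this
    have hdiff : Differentiable ℝ (LegendreP d (l+1)) := fun τ => (hder τ).differentiableAt
    -- bounds for inner Legendre on [σ,1]
    have hinner : ∀ τ ∈ Set.Icc σ 1, 0 ≤ LegendreP (d+2) l τ ∧ LegendreP (d+2) l τ ≤ 1 := by
      intro τ hτ
      obtain ⟨hτ1, hτ2⟩ := hτ
      have hbd : (1 - τ) * c' ≤ 1 := by
        have h1 : (1 - τ) * c' ≤ (1 - σ) * c' := by
          apply mul_le_mul_of_nonneg_right (by linarith) hc'pos.le
        have h2 : (1 - σ) * c' ≤ (1 - σ) * c := by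
          apply mul_le_mul_of_nonneg_left hcc' (by linarith)
        calc (1-τ)*c' ≤ (1-σ)*c := by linarith
          _ ≤ 1 := hσc
      have := IH (d+2) (by omega) τ hτ2 (by rw [← hc'def]; exact hbd)
      rw [← hc'def] at this
      refine ⟨by linarith [this.1, hbd], this.2⟩
    -- upper bound : monotone
    have hmono : MonotoneOn (LegendreP d (l+1)) (Set.Icc σ 1) := by
      apply monotoneOn_of_deriv_nonneg (convex_Icc σ 1) (hdiff.continuous.continuousOn)
        (hdiff.differentiableOn)
      intro τ hτ
      rw [interior_Icc] at hτ
      rw [(hder τ).deriv]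
      have := (hinner τ ⟨hτ.1.le, hτ.2.le⟩).1
      positivity
    have hub : LegendreP d (l+1) σ ≤ 1 := by
      have := hmono ⟨le_refl σ, hσ1⟩ ⟨hσ1, le_refl 1⟩ hσ1
      rwa [legP_at_one d (l+1) hd] at this
    -- lower bound : auxiliary antitone function
    have hanti : AntitoneOn (fun τ => LegendreP d (l+1) τ + (1 - τ) * c) (Set.Icc σ 1) := by
      have hderh : ∀ τ : ℝ, HasDerivAt (fun τ => LegendreP d (l+1) τ + (1 - τ) * c)
          (c * LegendreP (d+2) l τ + (-1) * c) τ := by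
        intro τ
        exact (hder τ).add (((hasDerivAt_id τ).const_sub 1).mul_const c)
      apply antitoneOn_of_deriv_nonpos (convex_Icc σ 1)
      · exact (Continuous.continuousOn
          ((hdiff.continuous).add ((continuous_const.sub continuous_id).mul continuous_const)))
      · exact fun τ _ => ((hderh τ).differentiableAt).differentiableWithinAt
      · intro τ hτ
        rw [interior_Icc] at hτ
        rw [(hderh τ).deriv]
        have := (hinner τ ⟨hτ.1.le, hτ.2.le⟩).2
        nlinarith
    have hlbaux := hanti ⟨le_refl σ, hσ1⟩ ⟨hσ1, le_refl 1⟩ hσ1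
    simp only [legP_at_one d (l+1) hd, sub_self, zero_mul, add_zero] at hlbaux
    exact ⟨by linarith, hub⟩

lemma legP_iteratedDeriv (d l : ℕ) (hd : 2 ≤ d) : ∀ n : ℕ, n ≤ l →
    iteratedDeriv n (LegendreP d l) = fun s =>
      (∏ i ∈ Finset.range n, (((l:ℝ) - (i:ℝ)) * ((l:ℝ) + (d:ℝ) + (i:ℝ) - 2) / ((d:ℝ) + 2*(i:ℝ) - 1))) *
        LegendreP (d + 2*n) (l - n) s := by
  intro n
  induction n with
  | zero => intro _; funext s; simp
  | succ n IH =>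
    intro hn1
    have hnl : n ≤ l := by omega
    rw [iteratedDeriv_succ, IH hnl]
    funext s
    have hd' : 2 ≤ d + 2*n := by omega
    have hl' : 1 ≤ l - n := by omega
    have hder : ∀ τ : ℝ, HasDerivAt (LegendreP (d + 2*n) (l - n))
        (((l-n:ℕ):ℝ) * (((l-n:ℕ):ℝ) + ((d+2*n:ℕ):ℝ) - 2) / (((d+2*n:ℕ):ℝ) - 1) *
          LegendreP (d + 2*n + 2) (l - n - 1) τ) τ :=
      fun τ => legP_hasDerivAt (d + 2*n) (l - n) hd' hl' τ
    rw [deriv_const_mul _ ((hder s).differentiableAt)]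
    rw [(hder s).deriv]
    rw [Finset.prod_range_succ]
    rw [show d + 2*n + 2 = d + 2*(n+1) from by ring, show l - n - 1 = l - (n+1) from by omega]
    have hcast : ((l-n:ℕ):ℝ) = (l:ℝ) - (n:ℝ) := by
      rw [Nat.cast_sub hnl]
    have hcast2 : ((d+2*n:ℕ):ℝ) = (d:ℝ) + 2*(n:ℝ) := by push_cast; ring
    rw [hcast, hcast2]
    ring

/-- Lower bound for derivatives of Legendre polynomials near `s = 1`:
if `1 - ε k_(d,n)(l) ≤ s ≤ 1` then `P_(l,d)^(n)(s) ≥ (1-ε) P_(l,d)^(n)(1) > 0`. -/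
theorem legendre_iteratedDeriv_lower
    (d : ℕ) (hd : 2 ≤ d) (n : ℕ) (hn : 1 ≤ n) (l : ℕ) (hl : n ≤ l)
    (ε : ℝ) (hε0 : 0 < ε) (hε1 : ε < 1)
    (s : ℝ) (hs1 : 1 - ε * kdn d n l ≤ s) (hs2 : s ≤ 1) :
    (1 - ε) * iteratedDeriv n (LegendreP d l) 1 ≤ iteratedDeriv n (LegendreP d l) s ∧
      0 < (1 - ε) * iteratedDeriv n (LegendreP d l) 1 := by
  have hd2 : (2:ℝ) ≤ (d:ℝ) := by exact_mod_cast hd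
  have hln : (n:ℝ) ≤ (l:ℝ) := by exact_mod_cast hl
  have hn1 : (1:ℝ) ≤ (n:ℝ) := by exact_mod_cast hn
  set C : ℝ := ∏ i ∈ Finset.range n,
      (((l:ℝ) - (i:ℝ)) * ((l:ℝ) + (d:ℝ) + (i:ℝ) - 2) / ((d:ℝ) + 2*(i:ℝ) - 1)) with hC
  have hCpos : 0 < C := by
    rw [hC]
    apply Finset.prod_pos
    intro i hi
    have hi' : (i:ℝ) < (l:ℝ) := by
      have := Finset.mem_range.mp hi
      have : i < l := by omega
      exact_mod_cast this
    have hi0 : (0:ℝ) ≤ (i:ℝ) := Nat.cast_nonneg i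
    apply div_pos
    · apply mul_pos <;> linarith
    · linarith
  have hiter := legP_iteratedDeriv d l hd n hl
  have hiter1 : iteratedDeriv n (LegendreP d l) 1 = C := by
    simp only [hiter, legP_at_one (d + 2*n) (l - n) (by omega), mul_one, ← hC]
  rcases eq_or_lt_of_le hl with heq | hlt
  · -- l = n
    have hval : ∀ τ : ℝ, iteratedDeriv n (LegendreP d l) τ = C := by
      intro τ
      simp only [hiter, show l - n = 0 from by omega, legP_deg_zero (d + 2*n) (by omega), mul_one, ← hC]
    rw [hval s, hiter1]
    constructor
    · nlinarith
    · nlinarith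
  · -- n < l
    have hlne : l ≠ n := by omega
    have hkdn : kdn d n l = (2 * (n : ℝ) + d - 1) / (((l : ℝ) + n + d - 2) * ((l : ℝ) - n)) := by
      rw [kdn, if_neg hlne]
    have hden : (0:ℝ) < ((l : ℝ) + n + d - 2) * ((l : ℝ) - n) := by
      have h1 : (n:ℝ) < (l:ℝ) := by exact_mod_cast hlt
      apply mul_pos <;> nlinarith
    have hnum : (0:ℝ) < 2 * (n : ℝ) + d - 1 := by linarith
    have hkpos : 0 < kdn d n l := by rw [hkdn]; exact div_pos hnum hden
    -- the constant for degree l-n in dimension d+2n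
    set c' : ℝ := ((l-n:ℕ):ℝ) * (((l-n:ℕ):ℝ) + ((d+2*n:ℕ):ℝ) - 2) / (((d+2*n:ℕ):ℝ) - 1)
      with hc'
    have hc'val : c' = (((l:ℝ) + n + d - 2) * ((l:ℝ) - n)) / (2 * (n : ℝ) + d - 1) := by
      rw [hc', Nat.cast_sub hl]
      push_cast
      ring_nf
    have hkc' : kdn d n l * c' = 1 := by
      rw [hkdn, hc'val]
      field_simp
      exact div_self hden.ne'
    have hc'pos : 0 < c' := by
      rw [hc'val]; exact div_pos hden (by linarith)
    have hs1' : (1 - s) * c' ≤ ε := by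
      have h1 : 1 - s ≤ ε * kdn d n l := by linarith
      calc (1 - s) * c' ≤ ε * kdn d n l * c' :=
            mul_le_mul_of_nonneg_right h1 hc'pos.le
        _ = ε * (kdn d n l * c') := by ring
        _ = ε := by rw [hkc', mul_one]
    have hbounds := legP_bounds (l - n) (by omega) (d + 2*n) (by omega) s hs2
      (by rw [← hc']; linarith)
    rw [← hc'] at hbounds
    have hlow : 1 - ε ≤ LegendreP (d + 2*n) (l - n) s := by linarith [hbounds.1]
    rw [hiter1]
    simp only [hiter]
    constructor
    · rw [← hC]
      nlinarith
    · nlinarith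


end
end

section
/- Let d ≥ 2, T ∈ (0,π], 0 < t₀ < T₀ ≤ T with T₀ < π, and ρ ∈ W(T,t₀,T₀). Set c_z := |S^{d−2}|·T^{1−d}·∫_0^{T₀} θ^{d−2}ρ(θ)dθ and C_z := |S^{d−2}|·T^{1−d}·∫_0^T θ^{d−2}ρ(θ)dθ. Then for every ε ∈ (0,1/2], every integer l ≥ 2, and every t ∈ [0, (T/T₀)·a_{d,1,ε}(l)] with t ≤ T, it holds that (1−ε)^{d−2}·c_z·t^{d−1} ≤ z_t ≤ C_z·t^{d−1}. -/
open MeasureTheory Real Filter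
open scoped ENNReal NNReal ComplexConjugate

noncomputable section

/-- Auxiliary: `(1-ε) x ≤ sin x` for `x ∈ [0, a]` with `a ≤ π/3`, `1 - ε ≤ cos a`. -/
lemma aux_sin_lb {a x ε : ℝ} (hx0 : 0 ≤ x) (hxa : x ≤ a) (ha : a ≤ π / 3)
    (hcos : 1 - ε ≤ Real.cos a) : (1 - ε) * x ≤ Real.sin x := by
  rcases eq_or_lt_of_le hx0 with h | h
  · simp [← h]
  · have hx2 : x < π / 2 := lt_of_le_of_lt (hxa.trans ha) (by linarith [Real.pi_pos])
    have hcosx : 0 < Real.cos x := Real.cos_pos_of_mem_Ioo ⟨by linarith, hx2⟩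
    have htan := Real.lt_tan h hx2
    rw [Real.tan_eq_sin_div_cos, lt_div_iff₀ hcosx] at htan
    have hca : Real.cos a ≤ Real.cos x :=
      Real.cos_le_cos_of_nonneg_of_le_pi hx0 (ha.trans (by linarith [Real.pi_pos])) hxa
    nlinarith

set_option maxHeartbeats 1000000 in
/-- Refined two-sided bound on `z_t` for small `t`:
`(1-ε)^(d-2) c_z t^(d-1) ≤ z_t ≤ C_z t^(d-1)` on `[0, (T/T₀) a_(d,1,ε)(l)]`. -/
theorem zt_refined_bounds
    (d : ℕ) (hd : 2 ≤ d)
    (T t₀ T₀ : ℝ) (hT0 : 0 < T) (hTπ : T ≤ π)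
    (ht₀ : 0 < t₀) (ht₀T₀ : t₀ < T₀) (hT₀T : T₀ ≤ T) (hT₀π : T₀ < π)
    (ρ : ℝ → ℝ) (hρ : memW T t₀ T₀ ρ) :
    ∀ ε : ℝ, 0 < ε → ε ≤ 1 / 2 → ∀ l : ℕ, 2 ≤ l →
      ∀ t : ℝ, 0 ≤ t → t ≤ T / T₀ * adn d 1 ε l → t ≤ T →
        (1 - ε) ^ (d - 2) *
            (sphereVol (d - 1) * T ^ ((1 : ℝ) - d) * ∫ θ in (0 : ℝ)..T₀, θ ^ (d - 2) * ρ θ) *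
            t ^ (d - 1) ≤ zt d T ρ t ∧
        zt d T ρ t ≤
          (sphereVol (d - 1) * T ^ ((1 : ℝ) - d) * ∫ θ in (0 : ℝ)..T, θ ^ (d - 2) * ρ θ) *
            t ^ (d - 1) := by
  intro ε hε hε2 l hl t ht0 hta htT
  have hT₀0 : 0 < T₀ := ht₀.trans ht₀T₀
  have hsV : 0 ≤ sphereVol (d - 1) := ENNReal.toReal_nonneg
  have hC0 : 0 ≤ t / T := div_nonneg ht0 hT0.le
  -- finiteness / integrability
  haveI hfin : IsFiniteMeasure (volume.restrict (Set.Ioc (0 : ℝ) T)) := by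
    constructor
    rw [Measure.restrict_apply_univ, Real.volume_Ioc]
    exact ENNReal.ofReal_lt_top
  have hρint : Integrable ρ (volume.restrict (Set.Ioc (0 : ℝ) T)) :=
    hρ.1.integrable (by norm_num)
  have hρpos : ∀ᵐ θ ∂(volume.restrict (Set.Ioc (0 : ℝ) T)), 0 ≤ ρ θ := hρ.2.1
  have hint_sin : Integrable (fun θ => Real.sin (t * θ / T) ^ (d - 2) * ρ θ)
      (volume.restrict (Set.Ioc (0 : ℝ) T)) := by
    refine hρint.bdd_mul (c := 1)
      (((Real.continuous_sin.comp (by continuity)).pow _).aestronglyMeasurable) ?_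
    filter_upwards with θ
    rw [Real.norm_eq_abs, abs_pow]
    exact pow_le_one₀ (abs_nonneg _) (Real.abs_sin_le_one _)
  have hint_pow : Integrable (fun θ => θ ^ (d - 2) * ρ θ)
      (volume.restrict (Set.Ioc (0 : ℝ) T)) := by
    refine hρint.bdd_mul (c := T ^ (d - 2))
      ((continuous_pow _).aestronglyMeasurable) ?_
    filter_upwards [ae_restrict_mem measurableSet_Ioc] with θ hθ
    rw [Real.norm_eq_abs, abs_pow, abs_of_pos hθ.1]
    exact pow_le_pow_left₀ hθ.1.le hθ.2 _
  -- interval integrals as set integrals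
  rw [zt, intervalIntegral.integral_of_le hT0.le,
    intervalIntegral.integral_of_le hT0.le, intervalIntegral.integral_of_le hT₀0.le]
  set I : ℝ := ∫ θ in Set.Ioc (0 : ℝ) T, Real.sin (t * θ / T) ^ (d - 2) * ρ θ with hI
  set J : ℝ := ∫ θ in Set.Ioc (0 : ℝ) T, θ ^ (d - 2) * ρ θ with hJ
  set J₀ : ℝ := ∫ θ in Set.Ioc (0 : ℝ) T₀, θ ^ (d - 2) * ρ θ with hJ₀
  -- power conversion
  have hC : T ^ ((1 : ℝ) - d) * t ^ (d - 1) = (t / T) ^ (d - 1) := by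
    rw [show ((1 : ℝ) - d) = -((d - 1 : ℕ) : ℝ) by
      push_cast [Nat.cast_sub (by omega : 1 ≤ d)]; ring]
    rw [Real.rpow_neg hT0.le, Real.rpow_natCast, div_pow, inv_mul_eq_div]
  have hd1 : d - 1 = (d - 2) + 1 := by omega
  constructor
  · -- lower bound
    -- facts about a := adn d 1 ε l
    set a : ℝ := adn d 1 ε l with haa
    have hkval : kdn d 1 l = (2 * (1 : ℝ) + d - 1) / (((l : ℝ) + 1 + d - 2) * ((l : ℝ) - 1)) := by
      rw [kdn, if_neg (by omega)]
      push_cast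
      ring_nf
    have hl2 : (2 : ℝ) ≤ (l : ℝ) := by exact_mod_cast hl
    have hd2 : (2 : ℝ) ≤ (d : ℝ) := by exact_mod_cast hd
    have hden : 0 < ((l : ℝ) + 1 + d - 2) * ((l : ℝ) - 1) := by nlinarith
    have hk0 : 0 < kdn d 1 l := by
      rw [hkval]
      apply div_pos (by linarith) hden
    have hk1 : kdn d 1 l ≤ 1 := by
      rw [hkval, div_le_one hden]; nlinarith
    have hεk : ε * kdn d 1 l ≤ ε := by nlinarith
    have hεk0 : 0 ≤ ε * kdn d 1 l := by positivity
    have hcosa : Real.cos a = 1 - ε * kdn d 1 l := by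
      rw [haa, adn, Real.cos_arccos (by linarith) (by linarith)]
    have hcoslb : 1 - ε ≤ Real.cos a := by rw [hcosa]; linarith
    have ha0 : 0 ≤ a := Real.arccos_nonneg _
    have haπ : a ≤ π := Real.arccos_le_pi _
    have ha3 : a ≤ π / 3 := by
      by_contra h
      push_neg at h
      have := Real.cos_lt_cos_of_nonneg_of_le_pi (by positivity) haπ h
      rw [Real.cos_pi_div_three, hcosa] at this
      linarith
    -- pointwise bound on Ioc 0 T₀ and integral comparison
    have hsub : Set.Ioc (0 : ℝ) T₀ ⊆ Set.Ioc (0 : ℝ) T := Set.Ioc_subset_Ioc_right hT₀T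
    have hstep : ((1 - ε) * (t / T)) ^ (d - 2) * J₀ ≤ I := by
      have h1 : ((1 - ε) * (t / T)) ^ (d - 2) * J₀
          ≤ ∫ θ in Set.Ioc (0 : ℝ) T₀, Real.sin (t * θ / T) ^ (d - 2) * ρ θ := by
        rw [hJ₀, ← MeasureTheory.integral_const_mul]
        refine MeasureTheory.integral_mono_ae
          ((MeasureTheory.IntegrableOn.mono_set hint_pow hsub).const_mul _) (MeasureTheory.IntegrableOn.mono_set hint_sin hsub) ?_
        filter_upwards [ae_restrict_of_ae_restrict_of_subset hsub hρpos,
          ae_restrict_mem measurableSet_Ioc] with θ hθρ hθ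
        have hx0 : 0 ≤ t * θ / T := div_nonneg (mul_nonneg ht0 hθ.1.le) hT0.le
        have hxa : t * θ / T ≤ a := by
          rw [div_le_iff₀ hT0]
          calc t * θ ≤ (T / T₀ * a) * T₀ := by
                apply mul_le_mul hta hθ.2 hθ.1.le
                positivity
            _ = a * T := by field_simp
        have hsin : (1 - ε) * (t * θ / T) ≤ Real.sin (t * θ / T) :=
          aux_sin_lb hx0 hxa ha3 hcoslb
        have heq : ((1 - ε) * (t / T)) ^ (d - 2) * (θ ^ (d - 2) * ρ θ)
            = ((1 - ε) * (t / T) * θ) ^ (d - 2) * ρ θ := by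
          rw [mul_pow ((1 - ε) * (t / T)) θ]; ring
        rw [heq]
        refine mul_le_mul_of_nonneg_right (pow_le_pow_left₀ ?_ ?_ _) hθρ
        · exact mul_nonneg (mul_nonneg (by linarith) hC0) hθ.1.le
        · calc (1 - ε) * (t / T) * θ = (1 - ε) * (t * θ / T) := by ring
            _ ≤ Real.sin (t * θ / T) := hsin
      have h2 : (∫ θ in Set.Ioc (0 : ℝ) T₀, Real.sin (t * θ / T) ^ (d - 2) * ρ θ) ≤ I := by
        rw [hI]
        refine MeasureTheory.setIntegral_mono_set hint_sin ?_ (HasSubset.Subset.eventuallyLE hsub)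
        filter_upwards [hρpos, ae_restrict_mem measurableSet_Ioc] with θ hθρ hθ
        have hsin0 : 0 ≤ Real.sin (t * θ / T) := by
          apply Real.sin_nonneg_of_nonneg_of_le_pi
          · exact div_nonneg (mul_nonneg ht0 hθ.1.le) hT0.le
          · have : t * θ / T ≤ θ := by
              rw [div_le_iff₀ hT0]; nlinarith [hθ.1, hθ.2]
            linarith [hθ.2]
        exact mul_nonneg (pow_nonneg hsin0 _) hθρ
      linarith
    calc (1 - ε) ^ (d - 2) * (sphereVol (d - 1) * T ^ ((1 : ℝ) - d) * J₀) * t ^ (d - 1)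
        = (1 - ε) ^ (d - 2) * sphereVol (d - 1) * J₀ * (T ^ ((1 : ℝ) - d) * t ^ (d - 1)) := by
          ring
      _ = sphereVol (d - 1) * (t / T) * (((1 - ε) * (t / T)) ^ (d - 2) * J₀) := by
          rw [hC, hd1, pow_succ, mul_pow]; ring
      _ ≤ sphereVol (d - 1) * (t / T) * I :=
          mul_le_mul_of_nonneg_left hstep (mul_nonneg hsV hC0)
  · -- upper bound
    have hstep : I ≤ (t / T) ^ (d - 2) * J := by
      rw [hI, hJ, ← MeasureTheory.integral_const_mul]
      refine MeasureTheory.integral_mono_ae hint_sin (hint_pow.const_mul _) ?_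
      filter_upwards [hρpos, ae_restrict_mem measurableSet_Ioc] with θ hθρ hθ
      have hx0 : 0 ≤ t * θ / T := div_nonneg (mul_nonneg ht0 hθ.1.le) hT0.le
      have hsin0 : 0 ≤ Real.sin (t * θ / T) := by
        apply Real.sin_nonneg_of_nonneg_of_le_pi hx0
        have : t * θ / T ≤ θ := by rw [div_le_iff₀ hT0]; nlinarith [hθ.1, hθ.2]
        linarith [hθ.2]
      have heq : (t / T) ^ (d - 2) * (θ ^ (d - 2) * ρ θ) = (t * θ / T) ^ (d - 2) * ρ θ := by
        rw [show t * θ / T = (t / T) * θ by ring, mul_pow]; ring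
      rw [heq]
      exact mul_le_mul_of_nonneg_right (pow_le_pow_left₀ hsin0 (Real.sin_le hx0) _) hθρ
    calc sphereVol (d - 1) * (t / T) * I
        ≤ sphereVol (d - 1) * (t / T) * ((t / T) ^ (d - 2) * J) :=
          mul_le_mul_of_nonneg_left hstep (mul_nonneg hsV hC0)
      _ = sphereVol (d - 1) * T ^ ((1 : ℝ) - d) * J * t ^ (d - 1) := by
          rw [show sphereVol (d-1) * T ^ ((1:ℝ)-d) * J * t^(d-1)
              = sphereVol (d-1) * J * (T ^ ((1:ℝ)-d) * t^(d-1)) by ring, hC, hd1, pow_succ]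
          ring


end
end
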